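/- arXiv:2206.14124 — 3 statements merged into one kernel-verified Lean document; each statement's English description precedes it below -/
import Mathlib

section
/- Let M be a Lie algebra over ℚ equipped with a filtration {F^n}_{n≥1}. If a, b, c ∈ M satisfy ⁅a,b⁆ = -2·b, ⁅a,c⁆ = 2·c and ⁅b,c⁆ = -a, then a, b, c ∈ F^n for every n ≥ 1. -/
/-! Each of `a, b, c` is a nonzero multiple of a bracket with `a` or `b` as first entry, so all
three lie in `⁅I, L⁆` as soon as `a` and `b` lie in the ideal `I`. Since `F (n + 1) ⊇ ⁅F n, F 1⁆ = ⁅F n, M⁆`,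
induction on `n` puts them in every `F n`. -/

namespace LieIdeal

variable {K L : Type*} [Field K] [LieRing L] [LieAlgebra K L]

theorem mem_lie_top_of_lie_eq_smul {I : LieIdeal K L} {x y z : L} {t : K} (ht : t ≠ 0)
    (hy : y ∈ I) (hyz : ⁅y, z⁆ = t • x) : x ∈ ⁅I, (⊤ : LieIdeal K L)⁆ := by
  rw [← LieSubmodule.mem_toSubmodule, ← Submodule.smul_mem_iff _ ht, ← hyz]
  exact LieSubmodule.lie_mem_lie hy (LieSubmodule.mem_top z)

theorem sl2_mem_lie_top {I : LieIdeal K L} {a b c : L} (h2 : (2 : K) ≠ 0)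
    (hab : ⁅a, b⁆ = (-2 : K) • b) (hac : ⁅a, c⁆ = (2 : K) • c) (hbc : ⁅b, c⁆ = -a)
    (ha : a ∈ I) (hb : b ∈ I) :
    a ∈ ⁅I, (⊤ : LieIdeal K L)⁆ ∧ b ∈ ⁅I, (⊤ : LieIdeal K L)⁆ ∧ c ∈ ⁅I, (⊤ : LieIdeal K L)⁆ :=
  ⟨mem_lie_top_of_lie_eq_smul (neg_ne_zero.mpr one_ne_zero) hb (by rw [hbc, neg_one_smul]),
    mem_lie_top_of_lie_eq_smul (neg_ne_zero.mpr h2) ha hab,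
    mem_lie_top_of_lie_eq_smul h2 ha hac⟩

end LieIdeal

theorem stmt_0_general {M : Type*} [LieRing M] [LieAlgebra ℚ M]
    (F : ℕ → LieIdeal ℚ M)
    (hF1 : F 1 = ⊤)
    (hbr : ∀ p q, 1 ≤ p → 1 ≤ q → ⁅F p, F q⁆ ≤ F (p + q))
    (a b c : M)
    (hab : ⁅a, b⁆ = (-2 : ℚ) • b)
    (hac : ⁅a, c⁆ = (2 : ℚ) • c)
    (hbc : ⁅b, c⁆ = -a) :
    ∀ n, 1 ≤ n → a ∈ F n ∧ b ∈ F n ∧ c ∈ F n := by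
  intro n hn
  induction n, hn using Nat.le_induction with
  | base => simp [hF1]
  | succ m hm ih =>
    have hle : ⁅F m, (⊤ : LieIdeal ℚ M)⁆ ≤ F (m + 1) := hF1 ▸ hbr m 1 hm le_rfl
    obtain ⟨ha, hb, hc⟩ := LieIdeal.sl2_mem_lie_top two_ne_zero hab hac hbc ih.1 ih.2.1
    exact ⟨hle ha, hle hb, hle hc⟩

/-- Let `M` be a Lie algebra over `ℚ` equipped with a filtration `{Fⁿ}_{n≥1}`
(a decreasing sequence of Lie ideals with `F¹ = M` and `⁅Fᵖ, Fᵠ⁆ ⊆ F^{p+q}`).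
If `a, b, c ∈ M` satisfy `⁅a,b⁆ = -2•b`, `⁅a,c⁆ = 2•c` and `⁅b,c⁆ = -a`,
then `a, b, c ∈ Fⁿ` for every `n ≥ 1`. -/
theorem stmt_0 {M : Type*} [LieRing M] [LieAlgebra ℚ M]
    (F : ℕ → LieIdeal ℚ M)
    (hF1 : F 1 = ⊤)
    (hdec : ∀ n, 1 ≤ n → F (n + 1) ≤ F n)
    (hbr : ∀ p q, 1 ≤ p → 1 ≤ q → ⁅F p, F q⁆ ≤ F (p + q))
    (a b c : M)
    (hab : ⁅a, b⁆ = (-2 : ℚ) • b)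
    (hac : ⁅a, c⁆ = (2 : ℚ) • c)
    (hbc : ⁅b, c⁆ = -a) :
    ∀ n, 1 ≤ n → a ∈ F n ∧ b ∈ F n ∧ c ∈ F n :=
  stmt_0_general F hF1 hbr a b c hab hac hbc
end

section
/- If M is a Lie algebra over ℚ equipped with a filtration {F^n}_{n≥1} satisfying ⋂_{n≥1} F^n = {0}, and a, b, c ∈ M satisfy ⁅a,b⁆ = -2·b, ⁅a,c⁆ = 2·c and ⁅b,c⁆ = -a, then a = b = c = 0. -/
/-!
The Lie ideal `J` generated by `a, b, c` satisfies `J ≤ ⁅J, M⁆`, because `a = ⁅c, b⁆`,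
`b = -½ ⁅a, b⁆` and `c = ½ ⁅a, c⁆`. Since bracketing with `M = F¹` raises the filtration
degree, `J ≤ Fⁿ` for every `n` by induction, so `J ≤ ⋂ Fⁿ = 0`.
-/

namespace LieIdeal

variable {R L : Type*} [CommRing R] [LieRing L] [LieAlgebra R L]

theorem le_of_le_lie_top {F : ℕ → LieIdeal R L} (hF1 : F 1 = ⊤)
    (hstep : ∀ n, 1 ≤ n → ⁅F n, (⊤ : LieIdeal R L)⁆ ≤ F (n + 1))
    {I : LieIdeal R L} (hI : I ≤ ⁅I, (⊤ : LieIdeal R L)⁆) :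
    ∀ n, 1 ≤ n → I ≤ F n := by
  intro n hn
  induction n, hn using Nat.le_induction with
  | base => exact hF1 ▸ le_top
  | succ n hn ih => exact hI.trans <| (LieSubmodule.mono_lie ih le_rfl).trans (hstep n hn)

theorem eq_bot_of_le_lie_top {F : ℕ → LieIdeal R L} (hF1 : F 1 = ⊤)
    (hstep : ∀ n, 1 ≤ n → ⁅F n, (⊤ : LieIdeal R L)⁆ ≤ F (n + 1))
    (hinter : (⨅ n ≥ 1, F n) = ⊥)
    {I : LieIdeal R L} (hI : I ≤ ⁅I, (⊤ : LieIdeal R L)⁆) : I = ⊥ :=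
  eq_bot_iff.mpr <| hinter ▸ le_iInf₂ (le_of_le_lie_top hF1 hstep hI)

end LieIdeal

theorem lieSpan_sl2_le_lie_top {K L : Type*} [Field K] [NeZero (2 : K)] [LieRing L]
    [LieAlgebra K L] {a b c : L}
    (hab : ⁅a, b⁆ = (-2 : K) • b) (hac : ⁅a, c⁆ = (2 : K) • c) (hbc : ⁅b, c⁆ = -a) :
    LieSubmodule.lieSpan K L {a, b, c} ≤
      ⁅LieSubmodule.lieSpan K L {a, b, c}, (⊤ : LieIdeal K L)⁆ := by
  set J := LieSubmodule.lieSpan K L {a, b, c}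
  have lie_mem {x : L} (hx : x ∈ ({a, b, c} : Set L)) (y : L) :
      ⁅x, y⁆ ∈ ⁅J, (⊤ : LieIdeal K L)⁆ :=
    LieSubmodule.lie_mem_lie (LieSubmodule.subset_lieSpan hx) (LieSubmodule.mem_top y)
  have h2 : (2 : K) ≠ 0 := two_ne_zero
  rw [LieSubmodule.lieSpan_le]
  rintro x (rfl | rfl | rfl)
  · have hcb : ⁅c, b⁆ = x := by rw [← lie_skew, hbc, neg_neg]
    exact hcb ▸ lie_mem (by simp) b
  · have hb : (-2 : K)⁻¹ • ⁅a, x⁆ = x := by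
      rw [hab, inv_smul_smul₀ (neg_ne_zero.mpr h2)]
    exact hb ▸ Submodule.smul_mem _ _ (lie_mem (by simp) x)
  · have hc : (2 : K)⁻¹ • ⁅a, x⁆ = x := by rw [hac, inv_smul_smul₀ h2]
    exact hc ▸ Submodule.smul_mem _ _ (lie_mem (by simp) x)

theorem stmt_1_general {M : Type*} [LieRing M] [LieAlgebra ℚ M]
    (F : ℕ → LieIdeal ℚ M)
    (hF1 : F 1 = ⊤)
    (hbr : ∀ p q, 1 ≤ p → 1 ≤ q → ⁅F p, F q⁆ ≤ F (p + q))
    (hinter : (⨅ n ≥ 1, F n) = ⊥)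
    (a b c : M)
    (hab : ⁅a, b⁆ = (-2 : ℚ) • b)
    (hac : ⁅a, c⁆ = (2 : ℚ) • c)
    (hbc : ⁅b, c⁆ = -a) :
    a = 0 ∧ b = 0 ∧ c = 0 := by
  have hstep (n : ℕ) (hn : 1 ≤ n) : ⁅F n, (⊤ : LieIdeal ℚ M)⁆ ≤ F (n + 1) :=
    hF1 ▸ hbr n 1 hn le_rfl
  have hJ := LieIdeal.eq_bot_of_le_lie_top hF1 hstep hinter (lieSpan_sl2_le_lie_top hab hac hbc)
  have eq_zero {x : M} (hx : x ∈ ({a, b, c} : Set M)) : x = 0 := by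
    simpa [hJ] using LieSubmodule.subset_lieSpan (R := ℚ) (L := M) hx
  exact ⟨eq_zero (by simp), eq_zero (by simp), eq_zero (by simp)⟩

/-- If `M` is a Lie algebra over `ℚ` with a filtration `{Fⁿ}_{n≥1}`
(a decreasing sequence of Lie ideals with `F¹ = M` and `⁅Fᵖ, Fᵠ⁆ ⊆ F^{p+q}`)
satisfying `⋂_{n≥1} Fⁿ = 0`, and `a, b, c ∈ M` satisfy `⁅a,b⁆ = -2•b`,
`⁅a,c⁆ = 2•c` and `⁅b,c⁆ = -a`, then `a = b = c = 0`. -/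
theorem stmt_1 {M : Type*} [LieRing M] [LieAlgebra ℚ M]
    (F : ℕ → LieIdeal ℚ M)
    (hF1 : F 1 = ⊤)
    (hdec : ∀ n, 1 ≤ n → F (n + 1) ≤ F n)
    (hbr : ∀ p q, 1 ≤ p → 1 ≤ q → ⁅F p, F q⁆ ≤ F (p + q))
    (hinter : (⨅ n ≥ 1, F n) = ⊥)
    (a b c : M)
    (hab : ⁅a, b⁆ = (-2 : ℚ) • b)
    (hac : ⁅a, c⁆ = (2 : ℚ) • c)
    (hbc : ⁅b, c⁆ = -a) :
    a = 0 ∧ b = 0 ∧ c = 0 :=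
  stmt_1_general F hF1 hbr hinter a b c hab hac hbc
end

section
/- Let L be the free Lie algebra over ℚ on two generators x and y, and let θ₁, θ₂, θ₃ be the derivations of L determined by θ₁(x) = x, θ₁(y) = -y; θ₂(x) = y, θ₂(y) = 0; θ₃(x) = 0, θ₃(y) = x. For every filtration {F^n}_{n≥1} of the Lie algebra Der L of derivations of L, the elements θ₁, θ₂, θ₃ belong to F^n for all n ≥ 1; moreover θ₂ ≠ 0. Consequently ⋂_{n≥1} F^n ≠ {0}, i.e., no filtration of Der L has trivial intersection (so Der L is not complete with respect to any filtration). -/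
/-!
`θ₁, θ₃, θ₂` form an `sl₂`-triple `h, e, f` in `Der L`. When `2` is invertible, each member of an
`sl₂`-triple is, up to a unit, the bracket of two members (`h = ⁅e, f⁆`, `e = ½⁅h, e⁆`,
`f = -½⁅h, f⁆`), so a triple lying in `Fⁿ` and in `F¹` lies in `⁅Fⁿ, F¹⁆ ⊆ Fⁿ⁺¹`. By induction the
triple lies in every `Fⁿ`, and it is nonzero since `θ₂ x = y ≠ 0`.
-/

namespace IsSl2Triple

variable {R L : Type*} [CommRing R] [LieRing L] [LieAlgebra R L] {h e f : L}

lemma subset_lie {I J : LieIdeal R L} (t : IsSl2Triple h e f) (h2 : IsUnit (2 : R))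
    (hI : {h, e, f} ⊆ (I : Set L)) (hJ : {h, e, f} ⊆ (J : Set L)) :
    {h, e, f} ⊆ ((⁅I, J⁆ : LieIdeal R L) : Set L) := by
  simp only [Set.insert_subset_iff, Set.singleton_subset_iff, SetLike.mem_coe] at hI hJ ⊢
  obtain ⟨hhI, heI, -⟩ := hI
  obtain ⟨-, heJ, hfJ⟩ := hJ
  refine ⟨t.lie_e_f ▸ LieSubmodule.lie_mem_lie heI hfJ, ?_, ?_⟩
  · rw [← LieSubmodule.mem_toSubmodule, ← Submodule.smul_mem_iff_of_isUnit _ h2,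
      ← t.lie_h_e_smul R]
    exact LieSubmodule.lie_mem_lie hhI heJ
  · rw [← LieSubmodule.mem_toSubmodule, ← Submodule.smul_mem_iff_of_isUnit _ h2, ← neg_mem_iff,
      ← t.lie_lie_smul_f R]
    exact LieSubmodule.lie_mem_lie hhI hfJ

lemma subset_of_filtration (t : IsSl2Triple h e f) (h2 : IsUnit (2 : R))
    (F : ℕ → LieIdeal R L) (hF1 : F 1 = ⊤)
    (hbr : ∀ p q, 1 ≤ p → 1 ≤ q → ⁅F p, F q⁆ ≤ F (p + q)) :
    ∀ n, 1 ≤ n → {h, e, f} ⊆ (F n : Set L) := by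
  have h1 : {h, e, f} ⊆ (F 1 : Set L) := by simp [hF1]
  refine Nat.le_induction h1 fun n hn hsub ↦ ?_
  exact (t.subset_lie h2 hsub h1).trans (hbr n 1 hn le_rfl)

end IsSl2Triple

namespace FreeLieAlgebra

variable {R X : Type*} [CommRing R]

lemma lieSpan_range_of : LieSubalgebra.lieSpan R (FreeLieAlgebra R X) (Set.range (of R)) = ⊤ := by
  set S := LieSubalgebra.lieSpan R (FreeLieAlgebra R X) (Set.range (of R))
  let g := lift R fun i ↦ (⟨of R i, LieSubalgebra.subset_lieSpan (Set.mem_range_self i)⟩ : S)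
  have hg : S.incl.comp g = LieHom.id := hom_ext fun _ ↦ by simp [g]
  refine eq_top_iff.2 fun a _ ↦ ?_
  rw [← LieHom.id_apply (R := R) a, ← hg]
  exact (g a).2

lemma lieDerivation_ext {M : Type*} [AddCommGroup M] [Module R M]
    [LieRingModule (FreeLieAlgebra R X) M] [LieModule R (FreeLieAlgebra R X) M]
    {D₁ D₂ : LieDerivation R (FreeLieAlgebra R X) M} (h : ∀ i, D₁ (of R i) = D₂ (of R i)) :
    D₁ = D₂ :=
  LieDerivation.ext_of_lieSpan_eq_top _ lieSpan_range_of <| by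
    rintro _ ⟨i, rfl⟩
    exact h i

lemma of_ne_zero [Nontrivial R] (i : X) : of R i ≠ 0 := by
  -- the commutative ring `R` as an abelian Lie algebra, into which `of R i` maps to `1`
  let _ : LieRing R := LieRing.ofAssociativeRing
  intro h
  simpa [lift_of_apply] using congrArg (lift R fun _ : X ↦ (1 : R)) h

lemma isSl2Triple_of_apply_of [Nontrivial R]
    {θ₁ θ₂ θ₃ : LieDerivation R (FreeLieAlgebra R (Fin 2)) (FreeLieAlgebra R (Fin 2))}
    (h1x : θ₁ (of R 0) = of R 0) (h1y : θ₁ (of R 1) = -of R 1)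
    (h2x : θ₂ (of R 0) = of R 1) (h2y : θ₂ (of R 1) = 0)
    (h3x : θ₃ (of R 0) = 0) (h3y : θ₃ (of R 1) = of R 0) :
    IsSl2Triple θ₁ θ₃ θ₂ where
  h_ne_zero hθ₁ := of_ne_zero (R := R) (0 : Fin 2) <| by rw [← h1x, hθ₁, LieDerivation.zero_apply]
  lie_e_f := lieDerivation_ext fun i ↦ by
    fin_cases i <;> simp [h1x, h1y, h2x, h2y, h3x, h3y]
  lie_h_e_nsmul := lieDerivation_ext fun i ↦ by
    fin_cases i <;> simp [h1x, h1y, h3x, h3y, two_smul]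
  lie_h_f_nsmul := lieDerivation_ext fun i ↦ by
    fin_cases i <;> simp [h1x, h1y, h2x, h2y, two_smul]; abel

end FreeLieAlgebra

theorem stmt_3_general
    (θ₁ θ₂ θ₃ : LieDerivation ℚ (FreeLieAlgebra ℚ (Fin 2)) (FreeLieAlgebra ℚ (Fin 2)))
    (h1x : θ₁ (FreeLieAlgebra.of ℚ (0 : Fin 2)) = FreeLieAlgebra.of ℚ (0 : Fin 2))
    (h1y : θ₁ (FreeLieAlgebra.of ℚ (1 : Fin 2)) = -FreeLieAlgebra.of ℚ (1 : Fin 2))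
    (h2x : θ₂ (FreeLieAlgebra.of ℚ (0 : Fin 2)) = FreeLieAlgebra.of ℚ (1 : Fin 2))
    (h2y : θ₂ (FreeLieAlgebra.of ℚ (1 : Fin 2)) = 0)
    (h3x : θ₃ (FreeLieAlgebra.of ℚ (0 : Fin 2)) = 0)
    (h3y : θ₃ (FreeLieAlgebra.of ℚ (1 : Fin 2)) = FreeLieAlgebra.of ℚ (0 : Fin 2))
    (F : ℕ → LieIdeal ℚ (LieDerivation ℚ (FreeLieAlgebra ℚ (Fin 2)) (FreeLieAlgebra ℚ (Fin 2))))
    (hF1 : F 1 = ⊤)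
    (hbr : ∀ p q, 1 ≤ p → 1 ≤ q → ⁅F p, F q⁆ ≤ F (p + q)) :
    (∀ n, 1 ≤ n → θ₁ ∈ F n ∧ θ₂ ∈ F n ∧ θ₃ ∈ F n) ∧ θ₂ ≠ 0 ∧ (⨅ n ≥ 1, F n) ≠ ⊥ := by
  have t := FreeLieAlgebra.isSl2Triple_of_apply_of h1x h1y h2x h2y h3x h3y
  have hmem : ∀ n, 1 ≤ n → θ₁ ∈ F n ∧ θ₂ ∈ F n ∧ θ₃ ∈ F n := fun n hn ↦ by
    have := t.subset_of_filtration (by norm_num) F hF1 hbr n hn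
    simp only [Set.insert_subset_iff, Set.singleton_subset_iff, SetLike.mem_coe] at this
    exact ⟨this.1, this.2.2, this.2.1⟩
  refine ⟨hmem, t.f_ne_zero, fun hbot ↦ t.f_ne_zero ?_⟩
  have hθ₂ : θ₂ ∈ ⨅ n ≥ 1, F n := by
    simpa only [ge_iff_le, LieSubmodule.mem_iInf] using fun n hn ↦ (hmem n hn).2.1
  rwa [hbot, LieSubmodule.mem_bot] at hθ₂

/-- Let `L` be the free Lie algebra over `ℚ` on two generators `x, y`, and let
`θ₁, θ₂, θ₃` be the derivations of `L` determined by `θ₁ x = x, θ₁ y = -y`;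
`θ₂ x = y, θ₂ y = 0`; `θ₃ x = 0, θ₃ y = x`.  For every filtration `{Fⁿ}_{n≥1}` of the Lie
algebra `Der L`, the elements `θ₁, θ₂, θ₃` belong to `Fⁿ` for all `n ≥ 1`; moreover `θ₂ ≠ 0`.
Consequently `⋂_{n≥1} Fⁿ ≠ 0`, so no filtration of `Der L` has trivial intersection. -/
theorem stmt_3
    (θ₁ θ₂ θ₃ : LieDerivation ℚ (FreeLieAlgebra ℚ (Fin 2)) (FreeLieAlgebra ℚ (Fin 2)))
    (h1x : θ₁ (FreeLieAlgebra.of ℚ (0 : Fin 2)) = FreeLieAlgebra.of ℚ (0 : Fin 2))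
    (h1y : θ₁ (FreeLieAlgebra.of ℚ (1 : Fin 2)) = -FreeLieAlgebra.of ℚ (1 : Fin 2))
    (h2x : θ₂ (FreeLieAlgebra.of ℚ (0 : Fin 2)) = FreeLieAlgebra.of ℚ (1 : Fin 2))
    (h2y : θ₂ (FreeLieAlgebra.of ℚ (1 : Fin 2)) = 0)
    (h3x : θ₃ (FreeLieAlgebra.of ℚ (0 : Fin 2)) = 0)
    (h3y : θ₃ (FreeLieAlgebra.of ℚ (1 : Fin 2)) = FreeLieAlgebra.of ℚ (0 : Fin 2))
    (F : ℕ → LieIdeal ℚ (LieDerivation ℚ (FreeLieAlgebra ℚ (Fin 2)) (FreeLieAlgebra ℚ (Fin 2))))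
    (hF1 : F 1 = ⊤)
    (hdec : ∀ n, 1 ≤ n → F (n + 1) ≤ F n)
    (hbr : ∀ p q, 1 ≤ p → 1 ≤ q → ⁅F p, F q⁆ ≤ F (p + q)) :
    (∀ n, 1 ≤ n → θ₁ ∈ F n ∧ θ₂ ∈ F n ∧ θ₃ ∈ F n) ∧ θ₂ ≠ 0 ∧ (⨅ n ≥ 1, F n) ≠ ⊥ :=
  stmt_3_general θ₁ θ₂ θ₃ h1x h1y h2x h2y h3x h3y F hF1 hbr
end
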